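/- arXiv:2603.22952 — 5 statements merged into one kernel-verified Lean document; each statement's English description precedes it below -/
import Mathlib

section
/- For β ∈ (0, ∞) and N > 0, define ψ_N(x) = (ln(e + β + |x|))^β if |x| < N and ψ_N(x) = (ln(e + β + N))^β if |x| ≥ N. Then for almost every x ∈ ℝ, |ψ_N'(x)| ≤ γ ψ_N(x), where γ = β / ((e + β) ln(e + β)) < 1. -/
open Real MeasureTheory Set

/-- The truncated logarithmic weight. -/
noncomputable def psiWeight (β N x : ℝ) : ℝ :=
  if |x| < N then (Real.log (Real.exp 1 + β + |x|)) ^ β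
  else (Real.log (Real.exp 1 + β + N)) ^ β

lemma psi_bound_aux (β t : ℝ) (hβ : 0 < β) (ht : 0 ≤ t) :
    β * (Real.log (Real.exp 1 + β + t)) ^ (β - 1) * (Real.exp 1 + β + t)⁻¹ ≤
      (β / ((Real.exp 1 + β) * Real.log (Real.exp 1 + β))) *
        (Real.log (Real.exp 1 + β + t)) ^ β := by
  set A := Real.exp 1 + β with hA
  have he : (0:ℝ) < Real.exp 1 := Real.exp_pos 1
  have hA1 : (1:ℝ) < A := by
    nlinarith [Real.add_one_le_exp (1:ℝ)]
  have hL0 : 1 < Real.log A := by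
    have : Real.log (Real.exp 1) < Real.log A := by
      apply Real.log_lt_log he; simp [hA]; linarith
    simpa [Real.log_exp] using this
  have hL0' : 0 < Real.log A := by linarith
  have hApos : 0 < A := by linarith
  have hAt : 0 < A + t := by linarith
  have hLle : Real.log A ≤ Real.log (A + t) :=
    Real.log_le_log hApos (by linarith)
  have hLpos : 0 < Real.log (A + t) := by linarith
  have hrpow : (Real.log (A + t)) ^ β
      = (Real.log (A + t)) ^ (β - 1) * Real.log (A + t) := by
    rw [← Real.rpow_add_one (ne_of_gt hLpos)]; ring_nf
  rw [hrpow]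
  have hpow : 0 < (Real.log (A + t)) ^ (β - 1) := Real.rpow_pos_of_pos hLpos _
  have key : A * Real.log A ≤ (A + t) * Real.log (A + t) :=
    mul_le_mul (by linarith) hLle (le_of_lt hL0') (by linarith)
  rw [div_mul_eq_mul_div, le_div_iff₀ (by positivity)]
  have h1 : 0 ≤ β * (Real.log (A + t)) ^ (β - 1) * (A + t)⁻¹ := by positivity
  calc β * (Real.log (A + t)) ^ (β - 1) * (A + t)⁻¹ * (A * Real.log A)
      ≤ β * (Real.log (A + t)) ^ (β - 1) * (A + t)⁻¹ * ((A + t) * Real.log (A + t)) :=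
        mul_le_mul_of_nonneg_left key h1
    _ = β * ((Real.log (A + t)) ^ (β - 1) * Real.log (A + t)) := by
        field_simp

/-- Lemma 2.10 (first part): for a.e. `x`, `|ψ_N'(x)| ≤ γ ψ_N(x)` with
`γ = β / ((e + β) log(e + β)) < 1`. -/
theorem psiWeight_deriv_bound (β N : ℝ) (hβ : 0 < β) (hN : 0 < N) :
    β / ((Real.exp 1 + β) * Real.log (Real.exp 1 + β)) < 1 ∧
    ∀ᵐ x : ℝ,
      |deriv (psiWeight β N) x| ≤
        (β / ((Real.exp 1 + β) * Real.log (Real.exp 1 + β))) * psiWeight β N x := by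
  set A := Real.exp 1 + β with hA
  have he : (0:ℝ) < Real.exp 1 := Real.exp_pos 1
  have hA1 : (1:ℝ) < A := by nlinarith [Real.add_one_le_exp (1:ℝ)]
  have hL0 : 1 < Real.log A := by
    have : Real.log (Real.exp 1) < Real.log A := by
      apply Real.log_lt_log he; simp [hA]; linarith
    simpa [Real.log_exp] using this
  have hL0' : 0 < Real.log A := by linarith
  have hApos : 0 < A := by linarith
  set γ := β / (A * Real.log A) with hγdef
  have hγpos : 0 < γ := by positivity
  have hγ1 : γ < 1 := by
    rw [hγdef, div_lt_one (by positivity)]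
    nlinarith
  refine ⟨hγ1, ?_⟩
  have hpsi_nonneg : ∀ x : ℝ, 0 ≤ psiWeight β N x := by
    intro x
    unfold psiWeight
    split_ifs with h
    · exact Real.rpow_nonneg (Real.log_nonneg (by nlinarith [abs_nonneg x])) _
    · exact Real.rpow_nonneg (Real.log_nonneg (by nlinarith)) _
  have hne : ∀ c : ℝ, ∀ᵐ x : ℝ, x ≠ c := by
    intro c
    rw [ae_iff]
    simp only [not_not]
    simpa using Real.volume_singleton (a := c)
  filter_upwards [hne N, hne (-N), hne 0] with x hxN hxmN hx0
  by_cases hlt : |x| < N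
  · -- inside: x ≠ 0
    rcases lt_or_gt_of_ne hx0 with hneg | hpos
    · -- x < 0 : locally psiWeight y = (log (A - y)) ^ β
      have hmem : Ioo (-N) 0 ∈ nhds x := Ioo_mem_nhds (by cases abs_lt.mp hlt; linarith) hneg
      have hev : psiWeight β N =ᶠ[nhds x] fun y => (Real.log (A - y)) ^ β := by
        filter_upwards [hmem] with y hy
        have hay : |y| = -y := abs_of_neg hy.2
        have hyN : |y| < N := by rw [hay]; linarith [hy.1]
        simp only [psiWeight]
        rw [if_pos hyN, hay, hA]
        ring_nf
      have hdin : HasDerivAt (fun y : ℝ => A - y) (-1) x := by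
        simpa using (hasDerivAt_id x).const_sub A
      have hAx : 0 < A - x := by linarith [hneg]
      have hLx : 0 < Real.log (A - x) := by
        have : Real.log 1 < Real.log (A - x) := Real.log_lt_log one_pos (by linarith)
        simpa using this
      have hd := ((hdin.log (ne_of_gt hAx)).rpow_const
        (p := β) (Or.inl (ne_of_gt hLx)))
      rw [hev.deriv_eq, hd.deriv]
      have hpsix : psiWeight β N x = (Real.log (A + |x|)) ^ β := by
        simp [psiWeight, hlt, hA]
      have habs : |x| = -x := abs_of_neg hneg
      have hb := psi_bound_aux β (-x) hβ (by linarith)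
      rw [hpsix, habs]
      have : |(-1) / (A - x) * β * (Real.log (A - x)) ^ (β - 1)|
          = β * (Real.log (A - x)) ^ (β - 1) * (A - x)⁻¹ := by
        rw [abs_mul, abs_mul, abs_div, abs_neg, abs_one, abs_of_pos hAx,
          abs_of_nonneg hβ.le, abs_of_nonneg (Real.rpow_nonneg hLx.le _)]
        ring
      rw [this]
      have h3 : A - x = A + -x := by ring
      rw [h3]
      exact hb
    · -- x > 0
      have hmem : Ioo 0 N ∈ nhds x := Ioo_mem_nhds hpos (by cases abs_lt.mp hlt; linarith)
      have hev : psiWeight β N =ᶠ[nhds x] fun y => (Real.log (A + y)) ^ β := by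
        filter_upwards [hmem] with y hy
        have hay : |y| = y := abs_of_pos hy.1
        have hyN : |y| < N := by rw [hay]; exact hy.2
        simp only [psiWeight]
        rw [if_pos hyN, hay, hA]
      have hdin : HasDerivAt (fun y : ℝ => A + y) 1 x := by
        simpa using (hasDerivAt_id x).const_add A
      have hAx : 0 < A + x := by linarith
      have hLx : 0 < Real.log (A + x) := by
        have : Real.log 1 < Real.log (A + x) := Real.log_lt_log one_pos (by linarith)
        simpa using this
      have hd := ((hdin.log (ne_of_gt hAx)).rpow_const
        (p := β) (Or.inl (ne_of_gt hLx)))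
      rw [hev.deriv_eq, hd.deriv]
      have hpsix : psiWeight β N x = (Real.log (A + |x|)) ^ β := by
        simp [psiWeight, hlt, hA]
      have habs : |x| = x := abs_of_pos hpos
      have hb := psi_bound_aux β x hβ hpos.le
      rw [hpsix, habs]
      have : |1 / (A + x) * β * (Real.log (A + x)) ^ (β - 1)|
          = β * (Real.log (A + x)) ^ (β - 1) * (A + x)⁻¹ := by
        rw [abs_mul, abs_mul, abs_div, abs_one, abs_of_pos hAx,
          abs_of_nonneg hβ.le, abs_of_nonneg (Real.rpow_nonneg hLx.le _)]
        ring
      rw [this]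
      exact hb
  · -- outside: N < |x|
    have hgt : N < |x| := lt_of_le_of_ne (not_lt.mp hlt) (by
      intro h
      rcases (abs_eq hN.le).mp h.symm with h1 | h1
      · exact hxN h1
      · exact hxmN h1)
    have hopen : IsOpen {y : ℝ | N < |y|} := isOpen_lt continuous_const continuous_abs
    have hev : psiWeight β N =ᶠ[nhds x] fun _ => (Real.log (A + N)) ^ β := by
      filter_upwards [hopen.mem_nhds hgt] with y hy
      simp [psiWeight, not_lt.mpr (le_of_lt hy), hA]
    rw [hev.deriv_eq, deriv_const]
    simpa using mul_nonneg hγpos.le (hpsi_nonneg x)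
end

section
/- For β ∈ (0, ∞) and N > 0, with ψ_N(x) = (ln(e + β + |x|))^β for |x| < N and ψ_N(x) = (ln(e + β + N))^β for |x| ≥ N, there exists a constant C_β depending only on β (not on N) such that for all x ∈ ℝ, ψ_N(x) · ∫_ℝ e^{-|x-y|} / ψ_N(y) dy ≤ C_β. -/
open Real MeasureTheory Set

lemma log_le_one_add_abs_sub_mul_log {u v : ℝ} (hu : 0 < u) (hv : exp 1 ≤ v) :
    log u ≤ (1 + |u - v|) * log v := by
  have hv₀ : 0 < v := (exp_pos 1).trans_le hv
  have hv₁ : 1 ≤ v := (one_le_exp zero_le_one).trans hv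
  have hlog_v : 1 ≤ log v := by simpa using log_le_log (exp_pos 1) hv
  have hratio : log u - log v ≤ |u - v| :=
    calc log u - log v = log (u / v) := (log_div hu.ne' hv₀.ne').symm
      _ ≤ u / v - 1 := log_le_sub_one_of_pos (div_pos hu hv₀)
      _ = (u - v) / v := by field_simp
      _ ≤ |u - v| / v := by gcongr; exact le_abs_self _
      _ ≤ |u - v| := div_le_self (abs_nonneg _) hv₁
  nlinarith [abs_nonneg (u - v)]

lemma abs_min_abs_sub_min_abs_le (x y N : ℝ) : |min |x| N - min |y| N| ≤ |x - y| := by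
  have h := abs_min_sub_min_le_max |x| N |y| N
  rw [sub_self, abs_zero, max_eq_left (abs_nonneg _)] at h
  exact h.trans (abs_abs_sub_abs_le_abs_sub x y)

lemma integrable_exp_neg_mul_abs {b : ℝ} (hb : 0 < b) :
    Integrable fun t : ℝ => exp (-b * |t|) := by
  rw [← integrableOn_univ, ← Iic_union_Ioi (a := 0), integrableOn_union]
  constructor
  · refine (integrableOn_exp_mul_Iic hb 0).congr_fun (fun t ht => ?_) measurableSet_Iic
    rw [abs_of_nonpos ht, neg_mul_neg]
  · refine (integrableOn_exp_mul_Ioi (neg_lt_zero.2 hb) 0).congr_fun (fun t ht => ?_)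
      measurableSet_Ioi
    rw [abs_of_pos ht]

lemma integrable_exp_neg_abs_mul_one_add_abs_rpow {β : ℝ} (hβ : 0 ≤ β) :
    Integrable fun t : ℝ => exp (-|t|) * (1 + |t|) ^ β := by
  refine ((integrable_exp_neg_mul_abs one_half_pos).const_mul
    ((2 * β) ^ β * exp (1 / 2))).mono' (by fun_prop) (Filter.Eventually.of_forall fun t => ?_)
  have hgrowth : (1 + |t|) ^ β ≤ (2 * β) ^ β * exp (1 / 2 * (1 + |t|)) := by
    have h := ProbabilityTheory.rpow_abs_le_mul_exp_abs (1 + |t|) hβ (t := 1 / 2) (by norm_num)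
    rwa [abs_of_nonneg (by positivity : 0 ≤ 1 + |t|),
      abs_of_pos (by norm_num : (0 : ℝ) < 1 / 2), show β / (1 / 2) = 2 * β by ring] at h
  rw [Real.norm_of_nonneg (by positivity)]
  calc exp (-|t|) * (1 + |t|) ^ β ≤ exp (-|t|) * ((2 * β) ^ β * exp (1 / 2 * (1 + |t|))) := by
        gcongr
    _ = (2 * β) ^ β * exp (1 / 2) * exp (-(1 / 2) * |t|) := by
        rw [mul_left_comm, ← exp_add, mul_assoc, ← exp_add]
        ring_nf

section psiWeight

variable {β N : ℝ}

lemma psiWeight_eq_log_rpow (x : ℝ) :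
    psiWeight β N x = log (exp 1 + β + min |x| N) ^ β := by
  unfold psiWeight
  split_ifs with h
  · rw [min_eq_left h.le]
  · rw [min_eq_right (not_lt.1 h)]

lemma exp_one_le_add_min_abs (hβ : 0 ≤ β) (hN : 0 ≤ N) (x : ℝ) :
    exp 1 ≤ exp 1 + β + min |x| N := by
  have := le_min (abs_nonneg x) hN
  linarith

lemma psiWeight_pos (hβ : 0 ≤ β) (hN : 0 ≤ N) (x : ℝ) : 0 < psiWeight β N x := by
  rw [psiWeight_eq_log_rpow]
  refine rpow_pos_of_pos (log_pos ?_) β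
  exact (one_lt_exp_iff.2 one_pos).trans_le (exp_one_le_add_min_abs hβ hN x)

lemma psiWeight_le_one_add_abs_sub_rpow_mul (hβ : 0 ≤ β) (hN : 0 ≤ N) (x y : ℝ) :
    psiWeight β N x ≤ (1 + |x - y|) ^ β * psiWeight β N y := by
  rw [psiWeight_eq_log_rpow, psiWeight_eq_log_rpow]
  have hu := exp_one_le_add_min_abs hβ hN x
  have hv := exp_one_le_add_min_abs hβ hN y
  have hlog_u : 0 ≤ log (exp 1 + β + min |x| N) :=
    log_nonneg ((one_le_exp zero_le_one).trans hu)
  have hlog_v : 0 ≤ log (exp 1 + β + min |y| N) :=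
    log_nonneg ((one_le_exp zero_le_one).trans hv)
  have hlog : log (exp 1 + β + min |x| N) ≤ (1 + |x - y|) * log (exp 1 + β + min |y| N) := by
    refine (log_le_one_add_abs_sub_mul_log ((exp_pos 1).trans_le hu) hv).trans ?_
    rw [add_sub_add_left_eq_sub]
    exact mul_le_mul_of_nonneg_right (by linarith [abs_min_abs_sub_min_abs_le x y N]) hlog_v
  calc log (exp 1 + β + min |x| N) ^ β
      ≤ ((1 + |x - y|) * log (exp 1 + β + min |y| N)) ^ β := rpow_le_rpow hlog_u hlog hβ
    _ = (1 + |x - y|) ^ β * log (exp 1 + β + min |y| N) ^ β := mul_rpow (by positivity) hlog_v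

end psiWeight

/-- Lemma 2.10 (second part): there is a constant `C_β`, depending only on `β`
(not on `N`), such that `ψ_N(x) ∫ e^{-|x-y|}/ψ_N(y) dy ≤ C_β` for all `x`. -/
theorem psiWeight_convolution_bound (β : ℝ) (hβ : 0 < β) :
    ∃ Cβ : ℝ, ∀ N : ℝ, 0 < N → ∀ x : ℝ,
      psiWeight β N x * (∫ y : ℝ, Real.exp (-|x - y|) / psiWeight β N y) ≤ Cβ := by
  set K : ℝ → ℝ := fun t => exp (-|t|) * (1 + |t|) ^ β
  refine ⟨∫ t, K t, fun N hN x => ?_⟩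
  have hψ := psiWeight_pos hβ.le hN.le
  have hpointwise (y : ℝ) :
      psiWeight β N x * (exp (-|x - y|) / psiWeight β N y) ≤ K (x - y) := by
    rw [mul_div_assoc', div_le_iff₀ (hψ y), mul_comm, mul_assoc]
    exact mul_le_mul_of_nonneg_left
      (psiWeight_le_one_add_abs_sub_rpow_mul hβ.le hN.le x y) (exp_pos _).le
  calc psiWeight β N x * ∫ y, exp (-|x - y|) / psiWeight β N y
      = ∫ y, psiWeight β N x * (exp (-|x - y|) / psiWeight β N y) :=
        (integral_const_mul _ _).symm
    _ ≤ ∫ y, K (x - y) :=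
        integral_mono_of_nonneg
          (Filter.Eventually.of_forall fun y => (mul_pos (hψ x) (div_pos (exp_pos _) (hψ y))).le)
          ((integrable_exp_neg_abs_mul_one_add_abs_rpow hβ.le).comp_sub_left x)
          (Filter.Eventually.of_forall hpointwise)
    _ = ∫ t, K t := integral_sub_left_eq_self K volume x
end

section
/- For β ∈ (0, ∞) and N > 0, let ψ_N(x) = (ln(e + β + |x|))^β for |x| < N and (ln(e + β + N))^β for |x| ≥ N, and let γ = β / ((e + β) ln(e + β)). Then the function x ↦ ψ_N(x) e^{-γx} is nonincreasing on ℝ and x ↦ ψ_N(x) e^{γx} is nondecreasing on ℝ. -/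
open Real Set

/-!
Write `ψ_N(x) = exp (u x)` with `u x = β log log (e + β + min (|x|, N))`. The map
`s ↦ β log log (c + s)` has derivative `β / ((c + s) log (c + s)) ≤ β / (c log c) = γ` on
`s ≥ 0` (for `c = e + β`), and `x ↦ min (|x|, N)` is `1`-Lipschitz, so `u` is `γ`-Lipschitz.
Hence `u x - γ x` is nonincreasing and `u x + γ x` is nondecreasing, and so are their
exponentials.
-/

lemma LipschitzWith.antitone_sub_mul {u : ℝ → ℝ} {K : NNReal} (hu : LipschitzWith K u) :
    Antitone fun x => u x - K * x := by
  intro x y hxy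
  have h := hu.le_add_mul y x
  rw [Real.dist_eq, abs_of_nonneg (sub_nonneg.2 hxy)] at h
  linarith

lemma LipschitzWith.monotone_add_mul {u : ℝ → ℝ} {K : NNReal} (hu : LipschitzWith K u) :
    Monotone fun x => u x + K * x := by
  intro x y hxy
  have h := hu.le_add_mul x y
  rw [Real.dist_eq, abs_of_nonpos (sub_nonpos.2 hxy)] at h
  linarith

lemma log_sub_log_le_div {x y : ℝ} (hx : 0 < x) (hxy : x ≤ y) :
    log y - log x ≤ (y - x) / x := by
  have hy : 0 < y := hx.trans_le hxy
  calc log y - log x = log (y / x) := (log_div hy.ne' hx.ne').symm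
    _ ≤ y / x - 1 := log_le_sub_one_of_pos (div_pos hy hx)
    _ = (y - x) / x := by field_simp

lemma log_log_add_sub_le {c a b : ℝ} (hc : 1 < c) (ha : 0 ≤ a) (hab : a ≤ b) :
    log (log (c + b)) - log (log (c + a)) ≤ (b - a) / (c * log c) := by
  have hlc : 0 < log c := log_pos hc
  have hlca : log c ≤ log (c + a) := log_le_log (by linarith) (by linarith)
  calc log (log (c + b)) - log (log (c + a))
      ≤ (log (c + b) - log (c + a)) / log (c + a) :=
        log_sub_log_le_div (hlc.trans_le hlca) (log_le_log (by linarith) (by linarith))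
    _ ≤ (b - a) / (c + a) / log (c + a) := by
        have h := log_sub_log_le_div (x := c + a) (y := c + b) (by linarith) (by linarith)
        rw [add_sub_add_left_eq_sub] at h
        exact div_le_div_of_nonneg_right h (hlc.trans_le hlca).le
    _ = (b - a) / ((c + a) * log (c + a)) := div_div _ _ _
    _ ≤ (b - a) / (c * log c) := by gcongr; linarith

lemma lipschitzOnWith_mul_log_log_add {β c : ℝ} (hβ : 0 ≤ β) (hc : 1 < c) :
    LipschitzOnWith (β / (c * log c)).toNNReal (fun s => β * log (log (c + s))) (Ici 0) := by
  refine LipschitzOnWith.of_le_add_mul' _ fun x hx y hy => ?_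
  rw [mem_Ici] at hx hy
  have hK : 0 ≤ β / (c * log c) := by have := log_pos hc; positivity
  rcases le_total x y with hxy | hyx
  · have hmono : β * log (log (c + x)) ≤ β * log (log (c + y)) :=
      mul_le_mul_of_nonneg_left
        (log_le_log (log_pos (by linarith)) (log_le_log (by linarith) (by linarith))) hβ
    linarith [mul_nonneg hK (dist_nonneg (x := x) (y := y))]
  · have h := mul_le_mul_of_nonneg_left (log_log_add_sub_le hc hy hyx) hβ
    rw [Real.dist_eq, abs_of_nonneg (sub_nonneg.2 hyx)]
    linarith [mul_div_assoc' β (x - y) (c * log c), div_mul_eq_mul_div β (c * log c) (x - y)]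

section

variable {β N : ℝ}

lemma lipschitzWith_mul_log_log_min_abs (hβ : 0 ≤ β) (hN : 0 ≤ N) :
    LipschitzWith (β / ((exp 1 + β) * log (exp 1 + β))).toNNReal
      fun x => β * log (log (exp 1 + β + min |x| N)) := by
  have hc : 1 < exp 1 + β := by linarith [add_one_le_exp (1 : ℝ)]
  have hmin : LipschitzWith 1 fun x : ℝ => min |x| N := lipschitzWith_one_norm.min_const N
  have hcomp := (lipschitzOnWith_mul_log_log_add hβ hc).comp hmin.lipschitzOnWith
    (s := univ) fun x _ => le_min (abs_nonneg x) hN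
  rw [mul_one, lipschitzOnWith_univ] at hcomp
  exact hcomp

lemma psiWeight_eq_exp (hβ : 0 ≤ β) (hN : 0 ≤ N) (x : ℝ) :
    psiWeight β N x = exp (β * log (log (exp 1 + β + min |x| N))) := by
  have hlog : 0 < log (exp 1 + β + min |x| N) :=
    log_pos (by linarith [add_one_le_exp (1 : ℝ), le_min (abs_nonneg x) hN])
  have hmin : psiWeight β N x = log (exp 1 + β + min |x| N) ^ β := by
    unfold psiWeight
    split_ifs with h
    · rw [min_eq_left h.le]
    · rw [min_eq_right (not_lt.1 h)]
  rw [hmin, rpow_def_of_pos hlog, mul_comm]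

end

/-- Lemma 2.10 (third part): with `γ = β / ((e + β) log(e + β))`, the function
`x ↦ ψ_N(x) e^{-γx}` is nonincreasing and `x ↦ ψ_N(x) e^{γx}` is nondecreasing. -/
theorem psiWeight_monotone (β N : ℝ) (hβ : 0 < β) (hN : 0 < N) :
    Antitone (fun x : ℝ => psiWeight β N x *
      Real.exp (-(β / ((Real.exp 1 + β) * Real.log (Real.exp 1 + β))) * x)) ∧
    Monotone (fun x : ℝ => psiWeight β N x *
      Real.exp ((β / ((Real.exp 1 + β) * Real.log (Real.exp 1 + β))) * x)) := by
  set γ := β / ((exp 1 + β) * log (exp 1 + β))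
  have hγ : 0 ≤ γ := div_nonneg hβ.le
    (mul_nonneg (by positivity) (log_nonneg (by linarith [add_one_le_exp (1 : ℝ)])))
  have hu := lipschitzWith_mul_log_log_min_abs hβ.le hN.le
  have hanti := hu.antitone_sub_mul
  have hmono := hu.monotone_add_mul
  rw [coe_toNNReal γ hγ] at hanti hmono
  simp only [psiWeight_eq_exp hβ.le hN.le, ← exp_add]
  refine ⟨fun x y hxy => exp_le_exp.2 ?_, fun x y hxy => exp_le_exp.2 ?_⟩
  · linarith [hanti hxy]
  · linarith [hmono hxy]
end

section
/- For β ∈ (0, ∞) and N > 0, with φ_N(x) = (1 + β + |x|)^β for |x| < N and φ_N(x) = (1 + β + N)^β for |x| ≥ N, there exists a constant C_β depending only on β such that for all x ∈ ℝ, φ_N(x) · ∫_ℝ e^{-|x-y|} / φ_N(y) dy ≤ C_β. -/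
open Real MeasureTheory Set

/-!
Writing `φ_N(x) = (1 + β + min(|x|, N))^β`, the map `x ↦ min(|x|, N)` is 1-Lipschitz, and
`log (1 + β + s)` is `(1 + β)⁻¹`-Lipschitz for `s ≥ 0`. Hence `φ_N(x) / φ_N(y) ≤ e^{β|x-y|/(1+β)}`,
so the integrand is dominated by `e^{-|x-y|/(1+β)}`, whose integral `2(1 + β)` is independent
of `N` and `x`.
-/

/-- The truncated algebraic weight. -/
noncomputable def phiWeight (β N x : ℝ) : ℝ :=
  if |x| < N then (1 + β + |x|) ^ β else (1 + β + N) ^ β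

lemma integral_exp_neg_abs_div {c : ℝ} (hc : 0 < c) : ∫ y : ℝ, exp (-|y| / c) = 2 * c := by
  have hhalf : ∫ t in Ioi (0 : ℝ), exp (-t / c) = c := by
    have hlin : ∀ t : ℝ, -t / c = -c⁻¹ * t := fun t => by ring
    simp_rw [hlin]
    rw [integral_exp_mul_Ioi (by simpa using hc) 0]
    field_simp
    simp
  rw [integral_comp_abs (f := fun t => exp (-t / c)), hhalf]

lemma integrable_exp_neg_abs_div {c : ℝ} (hc : 0 < c) : Integrable fun y : ℝ => exp (-|y| / c) :=
  Integrable.of_integral_ne_zero <| by rw [integral_exp_neg_abs_div hc]; positivity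

lemma min_abs_le_min_abs_add_abs_sub (N x y : ℝ) : min |x| N ≤ min |y| N + |x - y| :=
  calc min |x| N ≤ min (|y| + |x - y|) (N + |x - y|) :=
        min_le_min (sub_le_iff_le_add'.1 (abs_sub_abs_le_abs_sub x y))
          (le_add_of_nonneg_right (abs_nonneg _))
    _ = min |y| N + |x - y| := min_add_add_right _ _ _

lemma add_rpow_le_add_rpow_mul_exp {a b c t β : ℝ} (hc : 0 < c) (ha : 0 ≤ a) (hb : 0 ≤ b)
    (ht : 0 ≤ t) (hβ : 0 ≤ β) (hab : a ≤ b + t) :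
    (c + a) ^ β ≤ (c + b) ^ β * exp (β * t / c) := by
  have hbase : c + a ≤ (c + b) * exp (t / c) :=
    calc c + a ≤ (c + b) * (t / c + 1) := by
          have : 0 ≤ b * (t / c) := by positivity
          rw [mul_add, mul_one, add_mul, mul_div_cancel₀ t hc.ne']
          linarith
      _ ≤ (c + b) * exp (t / c) := by gcongr; exact add_one_le_exp _
  calc (c + a) ^ β ≤ ((c + b) * exp (t / c)) ^ β := by gcongr
    _ = (c + b) ^ β * exp (β * t / c) := by
        rw [mul_rpow (by positivity) (exp_pos _).le, ← exp_mul]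
        ring_nf

lemma phiWeight_eq_rpow_min (β N x : ℝ) : phiWeight β N x = (1 + β + min |x| N) ^ β := by
  unfold phiWeight
  split_ifs with h
  · rw [min_eq_left h.le]
  · rw [min_eq_right (not_lt.1 h)]

lemma phiWeight_pos {β N : ℝ} (hβ : 0 ≤ β) (hN : 0 ≤ N) (x : ℝ) : 0 < phiWeight β N x := by
  rw [phiWeight_eq_rpow_min]
  have : 0 ≤ min |x| N := le_min (abs_nonneg x) hN
  positivity

lemma phiWeight_le_mul_exp {β N : ℝ} (hβ : 0 ≤ β) (hN : 0 ≤ N) (x y : ℝ) :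
    phiWeight β N x ≤ phiWeight β N y * exp (β * |x - y| / (1 + β)) := by
  rw [phiWeight_eq_rpow_min, phiWeight_eq_rpow_min]
  exact add_rpow_le_add_rpow_mul_exp (by positivity) (le_min (abs_nonneg x) hN)
    (le_min (abs_nonneg y) hN) (abs_nonneg _) hβ (min_abs_le_min_abs_add_abs_sub N x y)

lemma phiWeight_mul_exp_div_le {β N : ℝ} (hβ : 0 ≤ β) (hN : 0 ≤ N) (x y : ℝ) :
    phiWeight β N x * (exp (-|x - y|) / phiWeight β N y) ≤ exp (-|x - y| / (1 + β)) := by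
  have hy := phiWeight_pos hβ hN y
  calc phiWeight β N x * (exp (-|x - y|) / phiWeight β N y)
      = phiWeight β N x / phiWeight β N y * exp (-|x - y|) := by ring
    _ ≤ exp (β * |x - y| / (1 + β)) * exp (-|x - y|) := by
        gcongr
        rw [div_le_iff₀ hy, mul_comm]
        exact phiWeight_le_mul_exp hβ hN x y
    _ = exp (-|x - y| / (1 + β)) := by
        rw [← exp_add]
        congr 1
        field_simp
        ring

/-- Lemma 2.11 (second part): there is a constant `C_β`, depending only on `β`
(not on `N`), such that `φ_N(x) ∫ e^{-|x-y|}/φ_N(y) dy ≤ C_β` for all `x`. -/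
theorem phiWeight_convolution_bound (β : ℝ) (hβ : 0 < β) :
    ∃ Cβ : ℝ, ∀ N : ℝ, 0 < N → ∀ x : ℝ,
      phiWeight β N x * (∫ y : ℝ, Real.exp (-|x - y|) / phiWeight β N y) ≤ Cβ := by
  have hc : 0 < 1 + β := by linarith
  refine ⟨2 * (1 + β), fun N hN x => ?_⟩
  have hnonneg (y : ℝ) : 0 ≤ phiWeight β N x * (exp (-|x - y|) / phiWeight β N y) :=
    mul_nonneg (phiWeight_pos hβ.le hN.le x).le
      (div_nonneg (exp_pos _).le (phiWeight_pos hβ.le hN.le y).le)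
  calc phiWeight β N x * (∫ y : ℝ, exp (-|x - y|) / phiWeight β N y)
      = ∫ y : ℝ, phiWeight β N x * (exp (-|x - y|) / phiWeight β N y) :=
        (integral_const_mul _ _).symm
    _ ≤ ∫ y : ℝ, exp (-|x - y| / (1 + β)) :=
        integral_mono_of_nonneg (.of_forall hnonneg)
          ((integrable_exp_neg_abs_div hc).comp_sub_left x)
          (.of_forall (phiWeight_mul_exp_div_le hβ.le hN.le x))
    _ = 2 * (1 + β) := by
        rw [integral_sub_left_eq_self (fun y => exp (-|y| / (1 + β))),
          integral_exp_neg_abs_div hc]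
end

section
/- Let y : [0, T) → ℝ be continuous and nonnegative with y(t) ≤ y_0 + 5∫_0^t y(s)³ ds for all t, where y_0 > 0. Then y(t) ≤ 2 y_0 for all t ≤ min(T, 1/(40 y_0²)). -/
open Real MeasureTheory Set

/-! If `y(t) > 2 y₀` for some admissible `t`, let `τ ≤ t` be the first time at which `y` reaches
`2 y₀`. Since `y < 2 y₀` on `[0, τ)`, the integral inequality gives `y(τ) ≤ y₀ + 40 y₀³ τ`, which is
below `2 y₀` unless `τ = t = 1/(40 y₀²)`; and in that case it bounds `y(t)` itself by `2 y₀`. -/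

theorem exists_first_ge_of_continuousOn {α β : Type*} [ConditionallyCompleteLinearOrder α]
    [TopologicalSpace α] [OrderTopology α] [LinearOrder β] [TopologicalSpace β]
    [OrderClosedTopology β] {f : α → β} {a b : α} {M : β} (hf : ContinuousOn f (Icc a b))
    (hab : a ≤ b) (hM : M ≤ f b) :
    ∃ τ ∈ Icc a b, M ≤ f τ ∧ ∀ s ∈ Ico a τ, f s < M := by
  set S := Icc a b ∩ f ⁻¹' Ici M
  have hS : IsClosed S := hf.preimage_isClosed_of_isClosed isClosed_Icc isClosed_Ici
  have hbdd : BddBelow S := ⟨a, fun x hx => hx.1.1⟩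
  obtain ⟨hτ, hfτ⟩ := hS.csInf_mem ⟨b, ⟨hab, le_rfl⟩, hM⟩ hbdd
  refine ⟨sInf S, hτ, hfτ, fun s hs => not_le.mp fun hfs => ?_⟩
  exact hs.2.not_ge (csInf_le hbdd ⟨⟨hs.1, hs.2.le.trans hτ.2⟩, hfs⟩)

theorem intervalIntegral.integral_le_sub_mul_of_le_on_Ioo {g : ℝ → ℝ} {a b M : ℝ} (hab : a ≤ b)
    (hg : IntervalIntegrable g volume a b) (h : ∀ x ∈ Ioo a b, g x ≤ M) :
    ∫ x in a..b, g x ≤ (b - a) * M :=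
  (intervalIntegral.integral_mono_on_of_le_Ioo hab hg intervalIntegrable_const h).trans_eq
    (by simp)

/-- Nonlinear Gronwall bootstrap (Proposition 5.1): if `y` is continuous and
nonnegative on `[0, T)` with `y t ≤ y₀ + 5∫₀^t y(s)³ ds` and `y₀ > 0`, then
`y t ≤ 2 y₀` for `t ≤ min(T, 1/(40 y₀²))`. -/
theorem nonlinear_gronwall_bootstrap (T y0 : ℝ) (y : ℝ → ℝ)
    (hy0 : 0 < y0)
    (hcont : ContinuousOn y (Set.Ico 0 T))
    (hnonneg : ∀ t ∈ Set.Ico (0 : ℝ) T, 0 ≤ y t)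
    (hineq : ∀ t ∈ Set.Ico (0 : ℝ) T, y t ≤ y0 + 5 * ∫ s in (0 : ℝ)..t, (y s) ^ 3) :
    ∀ t ∈ Set.Ico (0 : ℝ) T, t ≤ 1 / (40 * y0 ^ 2) → y t ≤ 2 * y0 := by
  intro t ⟨ht, htT⟩ ht_le
  rw [le_div_iff₀ (by positivity)] at ht_le
  by_contra! hexceed
  have hsub : Icc 0 t ⊆ Ico 0 T := fun s hs => ⟨hs.1, hs.2.trans_lt htT⟩
  obtain ⟨τ, hτ, hyτ, hbelow⟩ :=
    exists_first_ge_of_continuousOn (hcont.mono hsub) ht hexceed.le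
  have hτsub : Icc 0 τ ⊆ Ico 0 T := (Icc_subset_Icc_right hτ.2).trans hsub
  have hintegral : ∫ s in (0 : ℝ)..τ, y s ^ 3 ≤ (τ - 0) * (2 * y0) ^ 3 := by
    refine intervalIntegral.integral_le_sub_mul_of_le_on_Ioo hτ.1 ?_ fun s hs => ?_
    · exact ((hcont.mono (uIcc_of_le hτ.1 ▸ hτsub)).pow 3).intervalIntegrable
    · exact pow_le_pow_left₀ (hnonneg s (hτsub (Ioo_subset_Icc_self hs)))
        (hbelow s ⟨hs.1.le, hs.2⟩).le 3
  have hyτ_le : y τ ≤ y0 + 40 * y0 ^ 3 * τ := by linarith [hineq τ (hsub hτ)]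
  have hτ_eq : τ = t := le_antisymm hτ.2 <| by
    nlinarith [pow_pos hy0 3, mul_le_mul_of_nonneg_left ht_le hy0.le]
  subst hτ_eq
  nlinarith [mul_le_mul_of_nonneg_left ht_le hy0.le]
end
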